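/- arXiv:1709.00956 — 5 statements merged into one kernel-verified Lean document; each statement's English description precedes it below -/
import Mathlib

section
/- For every positive integer n, all complex roots of the polynomial D_n(t) = t^9 - (n+3)t^8 - (n-4)t^7 + (2n-8)t^6 + (2n+8)t^5 + (2n-8)t^4 - (2n-11)t^3 + (3n-5)t^2 + (3n+4)t - 4(n+1) are simple, i.e. D_n and its derivative D_n' have no common root in ℂ. -/
set_option maxRecDepth 10000


open Polynomial

/-- The denominator polynomial `D_n(t)`, over `ℂ`. -/
noncomputable def DpolyC (n : ℕ) : Polynomial ℂ :=
  X ^ 9 - C ((n : ℂ) + 3) * X ^ 8 - C ((n : ℂ) - 4) * X ^ 7 + C (2 * (n : ℂ) - 8) * X ^ 6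
    + C (2 * (n : ℂ) + 8) * X ^ 5 + C (2 * (n : ℂ) - 8) * X ^ 4 - C (2 * (n : ℂ) - 11) * X ^ 3
    + C (3 * (n : ℂ) - 5) * X ^ 2 + C (3 * (n : ℂ) + 4) * X - C (4 * ((n : ℂ) + 1))

/-- The resultant of `D_n` and `D_n'`, as an integer polynomial in `n`. -/
def Rres (a : ℤ) : ℤ := ((-2787725279232)*a + (-23952968404992)*a^2 + (-1194005028478976)*a^3 + (-2791806794781440)*a^4 + (-28147372028425216)*a^5 + (-100271146222672128)*a^6 + (-227155659791212544)*a^7 + (-375744535536699392)*a^8 + (-436823682353681408)*a^9 + (-369276695931527424)*a^10 + (-221310749589989376)*a^11 + (-76883986729280512)*a^12 + (-13452086684085248)*a^13 + (-3211145218356480)*a^14 + (-84315693201408)*a^15 + (9367548196608)*a^16)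

set_option maxHeartbeats 1000000 in
lemma Rres_ne_zero (n : ℕ) (hn : 0 < n) : Rres (n : ℤ) ≠ 0 := by
  rcases le_or_gt n 25 with h | h
  · interval_cases n <;> norm_num [Rres]
  · have hpos : 0 < Rres (n : ℤ) := by
      obtain ⟨m, rfl⟩ : ∃ m, n = m + 26 := ⟨n - 26, by omega⟩
      have key : Rres ((m + 26 : ℕ) : ℤ) = ((18356309345841539117459400503775232) + (37818898875638956103782589693976576)*(m:ℤ) + (18027150676817371194019113342089216)*(m:ℤ)^2 + (4421647180802193206155708261722112)*(m:ℤ)^3 + (689996721105046553099248612509952)*(m:ℤ)^4 + (75395728152326794881282874724352)*(m:ℤ)^5 + (6076110011473916752189908993792)*(m:ℤ)^6 + (372143439313996836997502689280)*(m:ℤ)^7 + (17615790806970866054796221440)*(m:ℤ)^8 + (649281596859687000104159232)*(m:ℤ)^9 + (18625055187988892674522880)*(m:ℤ)^10 + (412284486903656226109440)*(m:ℤ)^11 + (6914515520216026875904)*(m:ℤ)^12 + (85033618328404252672)*(m:ℤ)^13 + (723801244141935360)*(m:ℤ)^14 + (3812584356587520)*(m:ℤ)^15 + (9367548196608)*(m:ℤ)^16)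 := by
        unfold Rres; push_cast; ring
      rw [key]
      have h1 : (0:ℤ) ≤ (m:ℤ)^1 := pow_nonneg (Int.natCast_nonneg m) 1
      have h2 : (0:ℤ) ≤ (m:ℤ)^2 := pow_nonneg (Int.natCast_nonneg m) 2
      have h3 : (0:ℤ) ≤ (m:ℤ)^3 := pow_nonneg (Int.natCast_nonneg m) 3
      have h4 : (0:ℤ) ≤ (m:ℤ)^4 := pow_nonneg (Int.natCast_nonneg m) 4
      have h5 : (0:ℤ) ≤ (m:ℤ)^5 := pow_nonneg (Int.natCast_nonneg m) 5
      have h6 : (0:ℤ) ≤ (m:ℤ)^6 := pow_nonneg (Int.natCast_nonneg m) 6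
      have h7 : (0:ℤ) ≤ (m:ℤ)^7 := pow_nonneg (Int.natCast_nonneg m) 7
      have h8 : (0:ℤ) ≤ (m:ℤ)^8 := pow_nonneg (Int.natCast_nonneg m) 8
      have h9 : (0:ℤ) ≤ (m:ℤ)^9 := pow_nonneg (Int.natCast_nonneg m) 9
      have h10 : (0:ℤ) ≤ (m:ℤ)^10 := pow_nonneg (Int.natCast_nonneg m) 10
      have h11 : (0:ℤ) ≤ (m:ℤ)^11 := pow_nonneg (Int.natCast_nonneg m) 11
      have h12 : (0:ℤ) ≤ (m:ℤ)^12 := pow_nonneg (Int.natCast_nonneg m) 12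
      have h13 : (0:ℤ) ≤ (m:ℤ)^13 := pow_nonneg (Int.natCast_nonneg m) 13
      have h14 : (0:ℤ) ≤ (m:ℤ)^14 := pow_nonneg (Int.natCast_nonneg m) 14
      have h15 : (0:ℤ) ≤ (m:ℤ)^15 := pow_nonneg (Int.natCast_nonneg m) 15
      have h16 : (0:ℤ) ≤ (m:ℤ)^16 := pow_nonneg (Int.natCast_nonneg m) 16
      linarith
    exact hpos.ne'

set_option maxHeartbeats 1000000 in
theorem stmt_1 (n : ℕ) (hn : 0 < n) (z : ℂ) (hz : (DpolyC n).IsRoot z) :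
    ¬ (DpolyC n).derivative.IsRoot z := by
  intro hz'
  set a : ℂ := (n : ℂ) with ha
  have hD : eval z (DpolyC n) = 0 := hz
  have hD' : eval z (derivative (DpolyC n)) = 0 := hz'
  have hDval : eval z (DpolyC n) = (z^9 - (a+3)*z^8 - (a-4)*z^7 + (2*a-8)*z^6 + (2*a+8)*z^5 + (2*a-8)*z^4 - (2*a-11)*z^3 + (3*a-5)*z^2 + (3*a+4)*z - 4*(a+1)) := by
    simp [DpolyC, ha]
  have hD'val : eval z (derivative (DpolyC n)) = (9*z^8 - 8*(a+3)*z^7 - 7*(a-4)*z^6 + 6*(2*a-8)*z^5 + 5*(2*a+8)*z^4 + 4*(2*a-8)*z^3 - 3*(2*a-11)*z^2 + 2*(3*a-5)*z + (3*a+4)) := by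
    simp [DpolyC, ha]
    ring
  have hzero : (z^9 - (a+3)*z^8 - (a-4)*z^7 + (2*a-8)*z^6 + (2*a+8)*z^5 + (2*a-8)*z^4 - (2*a-11)*z^3 + (3*a-5)*z^2 + (3*a+4)*z - 4*(a+1)) = 0 := hDval ▸ hD
  have hzero' : (9*z^8 - 8*(a+3)*z^7 - 7*(a-4)*z^6 + 6*(2*a-8)*z^5 + 5*(2*a+8)*z^4 + 4*(2*a-8)*z^3 - 3*(2*a-11)*z^2 + 2*(3*a-5)*z + (3*a+4)) = 0 := hD'val ▸ hD'
  have key : (((-58077609984) + (275797377024)*a + (-30362192659456)*a^2 + (251534479929600)*a^3 + (-449829078686208)*a^4 + (3841184000924736)*a^5 + (11963513321588288)*a^6 + (27988902316471040)*a^7 + (43704374237285248)*a^8 + (43753916448957120)*a^9 + (32931451861147328)*a^10 + (14656980644975616)*a^11 + (2223212607045248)*a^12 + (697730959919424)*a^13 + (20929575184704)*a^14 + (-2140133685120)*a^15) + ((87116414976) + (418326294528)*a + (70030118349312)*a^2 + (169152699042560)*a^3 + (1912351680953920)*a^4 + (7919162354144576)*a^5 + (18771545377628736)*a^6 + (31905618715824320)*a^7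 + (38891418224471872)*a^8 + (32317891182401344)*a^9 + (20463421001129664)*a^10 + (6376259772917824)*a^11 + (1199750756150464)*a^12 + (257002938020544)*a^13 + (5725237957056)*a^14 + (-769592021184)*a^15)*z + ((-392023867392) + (-957551745024)*a + (-255599437339648)*a^2 + (-129395665343104)*a^3 + (-6092152329900480)*a^4 + (-16774617450984320)*a^5 + (-32257411032210368)*a^6 + (-43683339493110016)*a^7 + (-32871154370497728)*a^8 + (-15261034980594816)*a^9 + (1312764538828992)*a^10 + (8360628505158912)*a^11 + (623329400668352)*a^12 + (534726799856256)*a^13 + (22158047503296)*a^14 + (-1650388970880)*a^15)*z^2 + ((72597012480) + (-4729187214336)*a + (115045580169216)*a^2 + (18024440147008)*a^3 + (3420430695838464)*a^4 + (10218901717673344)*a^5 + (23686532627872768)*a^6 + (36002637809255424)*a^7 + (39283206499648256)*a^8 + (30964917082933760)*a^9 + (16561237629630464)*a^10 + (4957754381970432)*a^11 + (877734189961984)*a^12 + (178428311720832)*a^13 + (2520724323840)*a^14 + (-643436920512)*a^15)*z^3 + ((-508179087360) + (3027773263872)*a + (-250440803468288)*a^2 + (-306412900782336)*a^3 + (-6102030265805632)*a^4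 + (-20428023315323264)*a^5 + (-43665207734332992)*a^6 + (-68051345385272064)*a^7 + (-70619866884535104)*a^8 + (-51965713607243136)*a^9 + (-26343290968618432)*a^10 + (-3651860885855232)*a^11 + (-1286477634984640)*a^12 + (-38362161961600)*a^13 + (3757833158208)*a^14 + (-34450880256)*a^15)*z^4 + ((188752232448) + (-4732968311808)*a + (88240708597760)*a^2 + (-106809363398208)*a^3 + (2428229274868096)*a^4 + (7128791753599232)*a^5 + (13873520522520064)*a^6 + (18883141717411072)*a^7 + (13348708511796864)*a^8 + (4496430337449088)*a^9 + (-2447009878861568)*a^10 + (-5531272810002432)*a^11 + (-487263349951360)*a^12 + (-342088802332160)*a^13 + (-14296802394624)*a^14 + (1004630627520)*a^15)*z^5 + ((-217791037440) + (2035178551296)*a + (-67419109499904)*a^2 + (-174389609346688)*a^3 + (-2356753512502208)*a^4 + (-8763429433049920)*a^5 + (-19877659377223552)*a^6 + (-32689340975323392)*a^7 + (-37731372474362688)*a^8 + (-30921424095290560)*a^9 + (-18325849210920832)*a^10 + (-5585701835981312)*a^11 + (-999627439508928)*a^12 + (-213989101925952)*a^13 + (-3508602828288)*a^14 + (748823063040)*a^15)*z^6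 + ((130674622464) + (-2529764352)*a + (41826002065920)*a^2 + (113310250777152)*a^3 + (1187884899360576)*a^4 + (3978543816893376)*a^5 + (8199717265041984)*a^6 + (12769219647660096)*a^7 + (13192996232031552)*a^8 + (9675590909596992)*a^9 + (4937194008609984)*a^10 + (635968911208896)*a^11 + (231692137781184)*a^12 + (6032233422144)*a^13 + (-842425945920)*a^14)*z^7) * (z^9 - (a+3)*z^8 - (a-4)*z^7 + (2*a-8)*z^6 + (2*a+8)*z^5 + (2*a-8)*z^4 - (2*a-11)*z^3 + (3*a-5)*z^2 + (3*a+4)*z - 4*(a+1)) + (((-58077609984) + (-435653345280)*a + (-35747897374720)*a^2 + (-50518046818560)*a^3 + (-858357762338048)*a^4 + (-3001719763114240)*a^5 + (-7011799410819328)*a^6 + (-11577649751629312)*a^7 + (-13559620016696576)*a^8 + (-11577914889655552)*a^9 + (-6950369505535744)*a^10 + (-2526477762222592)*a^11 + (-445945108632320)*a^12 + (-107619272582400)*a^13 + (-3411315048192)*a^14 + (269004485376)*a^15) + ((-728813408256)*a + (12434135907840)*a^2 + (-71578890958336)*a^3 + (326249431336960)*a^4 + (-133747994592832)*a^5 + (-1080301476940864)*a^6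 + (-3900572369347840)*a^7 + (-7506160171628928)*a^8 + (-8298624790420160)*a^9 + (-6750659850875072)*a^10 + (-3343534025885184)*a^11 + (-457433170541696)*a^12 + (-165442361633600)*a^13 + (-4517226668352)*a^14 + (576002019456)*a^15)*z + ((-72597012480) + (294503632896)*a + (-38836085531136)*a^2 + (-74799972998912)*a^3 + (-1026935045194240)*a^4 + (-3658235532980672)*a^5 + (-8081131531279360)*a^6 + (-12983754094754624)*a^7 + (-14412670859376384)*a^8 + (-11203980078076608)*a^9 + (-6353283636793600)*a^10 + (-1477790850190528)*a^11 + (-342315651937536)*a^12 + (-45783633455424)*a^13 + (-806203926528)*a^14 + (95212010304)*a^15)*z^2 + ((87116414976) + (-311475225600)*a + (51406749303808)*a^2 + (15410240859712)*a^3 + (1222579013988928)*a^4 + (3433214749007104)*a^5 + (6620321630580800)*a^6 + (9039949333863040)*a^7 + (6829278273553216)*a^8 + (3107674103088256)*a^9 + (-294624352955200)*a^10 + (-1840922330527616)*a^11 + (-140656772126528)*a^12 + (-117581841884928)*a^13 + (-4642695094848)*a^14 + (379544031936)*a^15)*z^3 + ((-29038804992) + (1010292446208)*a + (-22364150115328)*a^2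 + (-9027088337728)*a^3 + (-697209400014784)*a^4 + (-2274948780798592)*a^5 + (-5303921574739648)*a^6 + (-8350211202461184)*a^7 + (-9370107468376256)*a^8 + (-7540477495480576)*a^9 + (-4230355748441408)*a^10 + (-1294395292861440)*a^11 + (-227743859029056)*a^12 + (-49221495714944)*a^13 + (-976971447360)*a^14 + (160234780608)*a^15)*z^4 + ((87116414976) + (-508945904640)*a + (38806991764480)*a^2 + (52214034599232)*a^3 + (988047490169408)*a^4 + (3270220094765824)*a^5 + (6889482306784704)*a^6 + (10628144726290688)*a^7 + (10817088991554880)*a^8 + (7767603927903616)*a^9 + (3797718491530048)*a^10 + (349621830988288)*a^11 + (175670611223488)*a^12 + (-4521779540480)*a^13 + (-860534181312)*a^14 + (45648263232)*a^15)*z^5 + ((-29038804992) + (610404197376)*a + (-12275196589056)*a^2 + (8363186413760)*a^3 + (-348525840902848)*a^4 + (-1036966561018368)*a^5 + (-2012669217142336)*a^6 + (-2768224869425408)*a^7 + (-2038175967318720)*a^8 + (-776104460466560)*a^9 + (232167386179648)*a^10 + (734631052106240)*a^11 + (59915739594176)*a^12 + (45698590760704)*a^13 + (1905447610944)*a^14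 + (-137279188800)*a^15)*z^6 + ((29038804992) + (-224611378176)*a + (9040092122624)*a^2 + (24089669611328)*a^3 + (307256130387392)*a^4 + (1135733101820864)*a^5 + (2561439876630016)*a^6 + (4206314135628800)*a^7 + (4838648896457024)*a^8 + (3956945503931328)*a^9 + (2338516244860672)*a^10 + (705140953902080)*a^11 + (127502373828800)*a^12 + (26860379696064)*a^13 + (433115815296)*a^14 + (-93602882880)*a^15)*z^7 + ((-14519402496) + (281084928)*a + (-4647333562880)*a^2 + (-12590027864128)*a^3 + (-131987211040064)*a^4 + (-442060424099264)*a^5 + (-911079696115776)*a^6 + (-1418802183073344)*a^7 + (-1465888470225728)*a^8 + (-1075065656621888)*a^9 + (-548577112067776)*a^10 + (-70663212356544)*a^11 + (-25743570864576)*a^12 + (-670248158016)*a^13 + (93602882880)*a^14)*z^8) * (9*z^8 - 8*(a+3)*z^7 - 7*(a-4)*z^6 + 6*(2*a-8)*z^5 + 5*(2*a+8)*z^4 + 4*(2*a-8)*z^3 - 3*(2*a-11)*z^2 + 2*(3*a-5)*z + (3*a+4))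
      = ((Rres (n : ℤ) : ℤ) : ℂ) := by
    rw [ha]
    unfold Rres
    push_cast
    ring
  rw [hzero, hzero', mul_zero, mul_zero, add_zero] at key
  exact Rres_ne_zero n hn (by exact_mod_cast key.symm)
end

section
/- For every positive integer n, every complex root of D_n(t) = t^9 - (n+3)t^8 - (n-4)t^7 + (2n-8)t^6 + (2n+8)t^5 + (2n-8)t^4 - (2n-11)t^3 + (3n-5)t^2 + (3n+4)t - 4(n+1) other than its unique real root greater than 2 has absolute value strictly less than 2. -/
/-!
Write `D_n = P + n Q` with `P, Q ∈ ℤ[t]` independent of `n`. If `z, w` are roots of `P + λ Q`,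
then `P z Q w - P w Q z = 0`, and this Bezoutian expression equals `(z - w) K(z + w, z w)` for an
explicit polynomial `K`. With `b = z + w`, `c = z w` we get `K(b, c) < 0` both for two real points
`z, w ≥ 2` and for a conjugate pair with `Re z ≥ 1`, which rules out a second real root above `2`
and non-real roots of modulus `≥ 2` with `Re z ≥ 1`. For a conjugate pair with `Re z < 1` we use
instead `S(b, c) = (P + Q)(z) Q(w) + (P + Q)(w) Q(z) = 2 (1 - λ) |Q z|² ≤ 0` (as `λ ≥ 1`), while
`S > 0` on that region. Every such sign claim becomes obvious after substituting variables ranging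
over `[0, ∞)`: all coefficients of the resulting polynomial are nonnegative. Real roots `≤ -2` are
excluded in the same way, and the root above `2` comes from the intermediate value theorem.
-/

open Polynomial

open scoped NNReal

namespace DpolyC

variable {R : Type*} [CommRing R]

def P (z : R) : R :=
  z ^ 9 - 3 * z ^ 8 + 4 * z ^ 7 - 8 * z ^ 6 + 8 * z ^ 5 - 8 * z ^ 4 + 11 * z ^ 3 - 5 * z ^ 2
    + 4 * z - 4

def Q (z : R) : R :=
  -z ^ 8 - z ^ 7 + 2 * z ^ 6 + 2 * z ^ 5 + 2 * z ^ 4 - 2 * z ^ 3 + 3 * z ^ 2 + 3 * z - 4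

-- The Bezoutian `(P z * Q w - P w * Q z) / (z - w)` in the coordinates `b = z + w`, `c = z * w`.
def K (b c : R) : R :=
  (-4 + 32 * b - 52 * b ^ 2 + 40 * b ^ 3 - 24 * b ^ 4 + 40 * b ^ 5 - 20 * b ^ 6 + 8 * b ^ 7
      - 4 * b ^ 8)
    + (25 - 39 * b + 40 * b ^ 2 - 144 * b ^ 3 + 68 * b ^ 4 - 32 * b ^ 5 + 23 * b ^ 6
      + 3 * b ^ 7) * c
    + (31 + 74 * b + 10 * b ^ 2 + 2 * b ^ 3 - 28 * b ^ 4 - 32 * b ^ 5 + 3 * b ^ 6) * c ^ 2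
    + (-52 + 6 * b - 17 * b ^ 2 + 89 * b ^ 3 + 2 * b ^ 4 - 2 * b ^ 5) * c ^ 3
    + (46 - 60 * b - 33 * b ^ 2 - 6 * b ^ 3 + 2 * b ^ 4) * c ^ 4
    + (-18 + 38 * b - 4 * b ^ 2 + 2 * b ^ 3) * c ^ 5
    + (-18 * b + 2 * b ^ 2) * c ^ 6
    + (5 - b) * c ^ 7
    - c ^ 8

-- `(P z + Q z) * Q w + (P w + Q w) * Q z` in the coordinates `b = z + w`, `c = z * w`.
def S (b c : R) : R :=
  (64 - 52 * b - 16 * b ^ 2 - 20 * b ^ 3 + 8 * b ^ 4 - 56 * b ^ 5 + 8 * b ^ 6 - 4 * b ^ 7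
      + 24 * b ^ 8 - 4 * b ^ 9)
    + (74 + 75 * b - 19 * b ^ 2 + 276 * b ^ 3 - 4 * b ^ 4 + 24 * b ^ 5 - 190 * b ^ 6 + 17 * b ^ 7
      + 3 * b ^ 8) * c
    + (-22 - 237 * b - 126 * b ^ 2 - 10 * b ^ 3 + 446 * b ^ 4 + 36 * b ^ 5 - 34 * b ^ 6
      + 3 * b ^ 7) * c ^ 2
    + (80 - 40 * b - 280 * b ^ 2 - 171 * b ^ 3 + 105 * b ^ 4 - 22 * b ^ 5 - 2 * b ^ 6) * c ^ 3
    + (-20 + 70 * b - 102 * b ^ 2 + 59 * b ^ 3 + 10 * b ^ 4 + 2 * b ^ 5) * c ^ 4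
    + (84 - 54 * b - 14 * b ^ 2 - 28 * b ^ 3 + 2 * b ^ 4) * c ^ 5
    + (-16 + 76 * b - 10 * b ^ 2 + 2 * b ^ 3) * c ^ 6
    + (2 - 5 * b - b ^ 2) * c ^ 7
    + (10 - b) * c ^ 8

def D (l z : R) : R := P z + l * Q z

section Map

variable {R' : Type*} [CommRing R'] (f : R →+* R')

lemma map_P (z : R) : f (P z) = P (f z) := by
  simp only [P, map_sub, map_add, map_mul, map_pow, map_ofNat]

lemma map_Q (z : R) : f (Q z) = Q (f z) := by
  simp only [Q, map_sub, map_add, map_neg, map_mul, map_pow, map_ofNat]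

lemma map_D (l z : R) : f (D l z) = D (f l) (f z) := by
  simp only [D, map_add, map_mul, map_P, map_Q]

lemma map_K (b c : R) : f (K b c) = K (f b) (f c) := by
  simp only [K, map_sub, map_add, map_neg, map_mul, map_pow, map_ofNat]

lemma map_S (b c : R) : f (S b c) = S (f b) (f c) := by
  simp only [S, map_sub, map_add, map_neg, map_mul, map_pow, map_ofNat]

end Map

lemma P_mul_Q_sub_P_mul_Q (z w : R) :
    P z * Q w - P w * Q z = (z - w) * K (z + w) (z * w) := by
  simp only [P, Q, K]; ring

lemma P_add_Q_mul_Q_add (z w : R) :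
    (P z + Q z) * Q w + (P w + Q w) * Q z = S (z + w) (z * w) := by
  simp only [P, Q, S]; ring

lemma eval_eq (n : ℕ) (z : ℂ) : (DpolyC n).eval z = D (n : ℂ) z := by
  simp only [DpolyC, D, P, Q, eval_add, eval_sub, eval_mul, eval_pow, eval_C, eval_X]
  ring

lemma isRoot_iff (n : ℕ) (z : ℂ) : (DpolyC n).IsRoot z ↔ D (n : ℂ) z = 0 := by
  rw [IsRoot.def, eval_eq]

lemma ofReal_D (l x : ℝ) : ((D l x : ℝ) : ℂ) = D (l : ℂ) (x : ℂ) :=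
  map_D Complex.ofRealHom l x

lemma ofReal_K (b c : ℝ) : ((K b c : ℝ) : ℂ) = K (b : ℂ) (c : ℂ) :=
  map_K Complex.ofRealHom b c

lemma ofReal_S (b c : ℝ) : ((S b c : ℝ) : ℂ) = S (b : ℂ) (c : ℂ) :=
  map_S Complex.ofRealHom b c

lemma isRoot_ofReal_iff (n : ℕ) (x : ℝ) : (DpolyC n).IsRoot (x : ℂ) ↔ D (n : ℝ) x = 0 := by
  rw [isRoot_iff, ← Complex.ofReal_natCast, ← ofReal_D, Complex.ofReal_eq_zero]

lemma K_neg_of_two_le (b c : ℝ) (hb : 2 ≤ b) (hbc : b ^ 2 < 4 * c) : K b c < 0 := by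
  lift b - 2 to ℝ≥0 using (by linarith) with a ha
  lift 4 * c - b ^ 2 to ℝ≥0 using (by linarith) with u hu
  obtain rfl : b = 2 + a := by linarith
  obtain rfl : c = ((2 + a) ^ 2 + u) / 4 := by linarith
  -- The polynomial has no constant term; its coefficient of `u` is `63`.
  have : 63 * (u : ℝ) ≤ -K (2 + (a : ℝ)) (((2 + a) ^ 2 + u) / 4) := by
    rw [← sub_nonneg]; simp only [K]; ring_nf; positivity
  have : (0 : ℝ) < u := by linarith
  linarith

lemma K_add_mul_neg (s t : ℝ) (hs : 2 ≤ s) (ht : 2 ≤ t) : K (s + t) (s * t) < 0 := by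
  lift s - 2 to ℝ≥0 using (by linarith) with α hα
  lift t - 2 to ℝ≥0 using (by linarith) with β hβ
  obtain rfl : s = 2 + α := by linarith
  obtain rfl : t = 2 + β := by linarith
  rw [← neg_pos]; simp only [K]; ring_nf; positivity

lemma S_pos_of_le_neg_four (b c : ℝ) (hb : b ≤ -4) (hbc : b ^ 2 < 4 * c) : 0 < S b c := by
  lift -4 - b to ℝ≥0 using (by linarith) with a ha
  lift 4 * c - b ^ 2 to ℝ≥0 using (by linarith) with u hu
  obtain rfl : b = -4 - a := by linarith
  obtain rfl : c = ((-4 - a) ^ 2 + u) / 4 := by linarith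
  simp only [S]; ring_nf; positivity

lemma S_pos_of_mem_Ico (b c : ℝ) (hb : -4 ≤ b) (hb' : b < 2) (hc : 4 ≤ c) : 0 < S b c := by
  lift (b + 4) / (2 - b) to ℝ≥0 using div_nonneg (by linarith) (sub_nonneg.2 hb'.le) with t ht
  lift c - 4 to ℝ≥0 using (by linarith) with g hg
  obtain rfl : b = (2 * t - 4) / (t + 1) := by
    have : 2 - b ≠ 0 := (sub_pos.2 hb').ne'
    rw [ht]; field_simp; ring
  obtain rfl : c = 4 + g := by linarith
  have ht1 : (0 : ℝ) < t + 1 := by positivity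
  -- Pólya: `(t + 1) ^ 9 * S` still has a negative coefficient, one more factor removes it.
  rw [← mul_pos_iff_of_pos_left (pow_pos ht1 10)]
  simp only [S]; field_simp; ring_nf; positivity

lemma S_pos_or_K_neg (b c : ℝ) (hbc : b ^ 2 < 4 * c) (hc : 4 ≤ c) : 0 < S b c ∨ K b c < 0 := by
  rcases le_or_gt b (-4) with hb | hb
  · exact .inl (S_pos_of_le_neg_four b c hb hbc)
  rcases lt_or_ge b 2 with hb' | hb'
  · exact .inl (S_pos_of_mem_Ico b c hb.le hb' hc)
  · exact .inr (K_neg_of_two_le b c hb' hbc)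

lemma D_two (l : ℝ) : D l 2 = -56 - 162 * l := by
  simp only [D, P, Q]; ring

lemma D_add_five_pos (l : ℝ) (hl : 0 ≤ l) : 0 < D l (l + 5) := by
  lift l to ℝ≥0 using hl
  simp only [D, P, Q]; ring_nf; positivity

lemma D_neg_of_le_neg_two (l : ℝ) (hl : 0 ≤ l) (x : ℝ) (hx : x ≤ -2) : D l x < 0 := by
  lift l to ℝ≥0 using hl
  lift -2 - x to ℝ≥0 using (by linarith) with a ha
  obtain rfl : x = -2 - a := by linarith
  rw [← neg_pos]; simp only [D, P, Q]; ring_nf; positivity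

lemma continuous_D (l : ℝ) : Continuous (D l) := by
  unfold D P Q; fun_prop

lemma exists_root_gt_two (l : ℝ) (hl : 0 ≤ l) : ∃ τ, 2 < τ ∧ D l τ = 0 := by
  have h2 : D l 2 < 0 := by rw [D_two]; linarith
  obtain ⟨τ, hτ, hτ0⟩ := intermediate_value_Ioo (by linarith : (2 : ℝ) ≤ l + 5)
    (continuous_D l).continuousOn ⟨h2, D_add_five_pos l hl⟩
  exact ⟨τ, hτ.1, hτ0⟩

lemma eq_of_D_eq_zero_of_two_le (l : ℝ) {s t : ℝ} (hs : 2 ≤ s) (ht : 2 ≤ t) (hDs : D l s = 0)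
    (hDt : D l t = 0) : s = t := by
  have h : (s - t) * K (s + t) (s * t) = 0 := by
    rw [← P_mul_Q_sub_P_mul_Q, eq_neg_of_add_eq_zero_left hDs, eq_neg_of_add_eq_zero_left hDt]
    ring
  exact sub_eq_zero.1 ((mul_eq_zero.1 h).resolve_right (K_add_mul_neg s t hs ht).ne)

lemma two_lt_of_two_le_abs (l : ℝ) (hl : 0 ≤ l) {x : ℝ} (hx : D l x = 0) (h : 2 ≤ |x|) :
    2 < x := by
  rcases le_abs'.1 h with hx' | hx'
  · exact absurd hx (D_neg_of_le_neg_two l hl x hx').ne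
  · refine hx'.lt_of_ne ?_
    rintro rfl
    rw [D_two] at hx
    linarith

lemma norm_lt_two_of_im_ne_zero (l : ℝ) (hl : 1 ≤ l) {z : ℂ} (hz : D (l : ℂ) z = 0)
    (him : z.im ≠ 0) : ‖z‖ < 2 := by
  set w := (starRingEnd ℂ) z
  have hw : D (l : ℂ) w = 0 := by
    rw [← Complex.conj_ofReal, ← map_D, hz, map_zero]
  have hPz : P z = -(l * Q z) := eq_neg_of_add_eq_zero_left hz
  have hPw : P w = -(l * Q w) := eq_neg_of_add_eq_zero_left hw
  have hb : z + w = ((2 * z.re : ℝ) : ℂ) := Complex.add_conj z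
  have hc : z * w = (Complex.normSq z : ℂ) := Complex.mul_conj z
  have hK : K (2 * z.re) (Complex.normSq z) = 0 := by
    have h : (z - w) * K (z + w) (z * w) = 0 := by
      rw [← P_mul_Q_sub_P_mul_Q, hPz, hPw]; ring
    have hzw : z - w ≠ 0 := by simp [w, Complex.sub_conj, him]
    rw [hb, hc, ← ofReal_K] at h
    exact_mod_cast (mul_eq_zero.1 h).resolve_left hzw
  have hS : S (2 * z.re) (Complex.normSq z) = 2 * (1 - l) * Complex.normSq (Q z) := by
    have hQ : Q z * Q w = (Complex.normSq (Q z) : ℂ) := by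
      rw [← map_Q, Complex.mul_conj]
    have h : ((S (2 * z.re) (Complex.normSq z) : ℝ) : ℂ)
        = ((2 * (1 - l) * Complex.normSq (Q z) : ℝ) : ℂ) := by
      rw [ofReal_S, ← hb, ← hc, ← P_add_Q_mul_Q_add, hPz, hPw]
      push_cast
      rw [← hQ]
      ring
    exact_mod_cast h
  by_contra! h2
  have hc4 : 4 ≤ Complex.normSq z := by
    rw [Complex.normSq_eq_norm_sq]; nlinarith
  have hbc : (2 * z.re) ^ 2 < 4 * Complex.normSq z := by
    rw [Complex.normSq_apply]; nlinarith [sq_pos_of_ne_zero him]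
  rcases S_pos_or_K_neg _ _ hbc hc4 with h | h
  · nlinarith [Complex.normSq_nonneg (Q z)]
  · exact h.ne hK

end DpolyC

theorem stmt_7 (n : ℕ) (hn : 0 < n) :
    ∃ τ : ℝ, 2 < τ ∧ (DpolyC n).IsRoot (τ : ℂ) ∧
      (∀ s : ℝ, 2 < s → (DpolyC n).IsRoot (s : ℂ) → s = τ) ∧
      ∀ z : ℂ, (DpolyC n).IsRoot z → z ≠ (τ : ℂ) → ‖z‖ < 2 := by
  have hn0 : (0 : ℝ) ≤ n := n.cast_nonneg
  obtain ⟨τ, hτ2, hτ⟩ := DpolyC.exists_root_gt_two n hn0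
  have eq_τ : ∀ s : ℝ, 2 ≤ s → (DpolyC n).IsRoot (s : ℂ) → s = τ := fun s hs hsroot =>
    DpolyC.eq_of_D_eq_zero_of_two_le n hs hτ2.le ((DpolyC.isRoot_ofReal_iff n s).1 hsroot) hτ
  refine ⟨τ, hτ2, (DpolyC.isRoot_ofReal_iff n τ).2 hτ, fun s hs ↦ eq_τ s hs.le,
    fun z hz hzτ ↦ ?_⟩
  by_contra! h2
  rcases eq_or_ne z.im 0 with him | him
  · obtain ⟨x, rfl⟩ : ∃ x : ℝ, (x : ℂ) = z := ⟨z.re, Complex.ext rfl him.symm⟩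
    rw [Complex.norm_real, Real.norm_eq_abs] at h2
    have hx2 := DpolyC.two_lt_of_two_le_abs n hn0 ((DpolyC.isRoot_ofReal_iff n x).1 hz) h2
    exact hzτ (congrArg _ (eq_τ x hx2.le hz))
  · have hz' : DpolyC.D ((n : ℝ) : ℂ) z = 0 := by exact_mod_cast (DpolyC.isRoot_iff n z).1 hz
    exact (DpolyC.norm_lt_two_of_im_ne_zero n (by exact_mod_cast hn) hz' him).not_ge h2
end

section
/- For every positive integer n, the polynomial D_n(t) = t^9 - (n+3)t^8 - (n-4)t^7 + (2n-8)t^6 + (2n+8)t^5 + (2n-8)t^4 - (2n-11)t^3 + (3n-5)t^2 + (3n+4)t - 4(n+1) has no roots on the circle |z| = 2 in the complex plane. -/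
/-!
Write `D_n = A - n B` with real polynomials `A`, `B`. At a root `z` we get
`A(z) conj (B(z)) = n |B(z)|²`, hence `Re (A(z) conj (B(z))) ≥ |B(z)|²` as `n ≥ 1`.
On `|z| = 2` we have `conj z = 4 / z`, so `2 (|B(z)|² - Re (A(z) conj (B(z))))` is symmetric in
`z` and `4 / z` and therefore a polynomial `gapPoly` in `s = z + conj z = 2 Re z ∈ [-4, 4]`.
The Bernstein coefficients of `gapPoly - 70000` on `[-4, 0]` and on `[0, 4]` are all positive, so `gapPoly > 0`
there, a contradiction.
-/

open Polynomial

open ComplexConjugate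

noncomputable def DpolyA : ℝ[X] :=
  X ^ 9 - 3 * X ^ 8 + 4 * X ^ 7 - 8 * X ^ 6 + 8 * X ^ 5 - 8 * X ^ 4 + 11 * X ^ 3 - 5 * X ^ 2
    + 4 * X - 4

noncomputable def DpolyB : ℝ[X] :=
  X ^ 8 + X ^ 7 - 2 * X ^ 6 - 2 * X ^ 5 - 2 * X ^ 4 + 2 * X ^ 3 - 3 * X ^ 2 - 3 * X + 4

noncomputable def gapPoly : ℝ[X] :=
  708616 + 120360 * X - 117820 * X ^ 2 - 15396 * X ^ 3 + 18456 * X ^ 4 - 280 * X ^ 5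
    - 1424 * X ^ 6 + 112 * X ^ 7 + 36 * X ^ 8 - 4 * X ^ 9

theorem eval_DpolyC (n : ℕ) (z : ℂ) :
    (DpolyC n).eval z = aeval z DpolyA - n * aeval z DpolyB := by
  simp [DpolyC, DpolyA, DpolyB, map_ofNat]
  ring

theorem aeval_gapPoly_add_four_div (z : ℂ) (hz : z ≠ 0) :
    2 * aeval z DpolyB * aeval (4 / z) DpolyB - aeval z DpolyA * aeval (4 / z) DpolyB
      - aeval (4 / z) DpolyA * aeval z DpolyB = aeval (z + 4 / z) gapPoly := by
  simp only [DpolyA, DpolyB, gapPoly, map_add, map_sub, map_mul, map_pow, aeval_X, map_ofNat]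
  field_simp
  ring

theorem gapPoly_pos_of_nonpos {s : ℝ} (hs : -4 ≤ s) (hs0 : s ≤ 0) : 0 < gapPoly.eval s := by
  have hbernstein : gapPoly.eval s = 70000 + (79827 * (s + 4) ^ 9 + 658263 * (-s) * (s + 4) ^ 8
      + 2156692 * (-s) ^ 2 * (s + 4) ^ 7 + 3494116 * (-s) ^ 3 * (s + 4) ^ 6
      + 3069282 * (-s) ^ 4 * (s + 4) ^ 5 + 2434522 * (-s) ^ 5 * (s + 4) ^ 4
      + 2871540 * (-s) ^ 6 * (s + 4) ^ 3 + 1792132 * (-s) ^ 7 * (s + 4) ^ 2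
      + 71747 * (-s) ^ 8 * (s + 4) + 1127 * (-s) ^ 9) / 2 ^ 15 := by
    simp only [gapPoly, eval_add, eval_sub, eval_mul, eval_pow, eval_X, eval_ofNat]
    ring
  have : 0 ≤ -s := by linarith
  have : 0 ≤ s + 4 := by linarith
  rw [hbernstein]
  positivity

theorem gapPoly_pos_of_nonneg {s : ℝ} (hs0 : 0 ≤ s) (hs : s ≤ 4) : 0 < gapPoly.eval s := by
  have hbernstein : gapPoly.eval s = 70000 + (79 * s ^ 9 + 187395 * (4 - s) * s ^ 8
      + 1495844 * (4 - s) ^ 2 * s ^ 7 + 4398260 * (4 - s) ^ 3 * s ^ 6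
      + 7093002 * (4 - s) ^ 4 * s ^ 5 + 8331426 * (4 - s) ^ 5 * s ^ 4
      + 6617860 * (4 - s) ^ 6 * s ^ 3 + 3119572 * (4 - s) ^ 7 * s ^ 2
      + 778623 * (4 - s) ^ 8 * s + 79827 * (4 - s) ^ 9) / 2 ^ 15 := by
    simp only [gapPoly, eval_add, eval_sub, eval_mul, eval_pow, eval_X, eval_ofNat]
    ring
  have : 0 ≤ 4 - s := by linarith
  rw [hbernstein]
  positivity

theorem gapPoly_pos_of_abs_le {s : ℝ} (hs : |s| ≤ 4) : 0 < gapPoly.eval s := by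
  rcases le_total s 0 with hs0 | hs0
  · exact gapPoly_pos_of_nonpos (neg_le_of_abs_le hs) hs0
  · exact gapPoly_pos_of_nonneg hs0 (le_of_abs_le hs)

theorem two_mul_normSq_sub_re_mul_conj (a b : ℂ) :
    ((2 * (Complex.normSq b - (a * conj b).re) : ℝ) : ℂ)
      = 2 * b * conj b - a * conj b - conj a * b := by
  push_cast
  rw [Complex.re_eq_add_conj, ← Complex.mul_conj]
  simp only [map_mul, Complex.conj_conj]
  ring

theorem re_mul_conj_lt_normSq {z : ℂ} (hz : ‖z‖ = 2) :
    (aeval z DpolyA * conj (aeval z DpolyB)).re < Complex.normSq (aeval z DpolyB) := by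
  have hz0 : z ≠ 0 := norm_ne_zero_iff.mp (by rw [hz]; norm_num)
  have hconj : conj z = 4 / z := by
    rw [eq_div_iff hz0, mul_comm, Complex.mul_conj, Complex.normSq_eq_norm_sq, hz]
    norm_num
  have hsum : z + 4 / z = ((2 * z.re : ℝ) : ℂ) := by
    rw [← hconj, Complex.add_conj]
  have hsymm : 2 * aeval z DpolyB * conj (aeval z DpolyB)
      - aeval z DpolyA * conj (aeval z DpolyB) - conj (aeval z DpolyA) * aeval z DpolyB
      = aeval (z + 4 / z) gapPoly := by
    rw [← aeval_conj, ← aeval_conj, hconj]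
    exact aeval_gapPoly_add_four_div z hz0
  have hgap : 2 * (Complex.normSq (aeval z DpolyB) - (aeval z DpolyA * conj (aeval z DpolyB)).re)
      = gapPoly.eval (2 * z.re) := by
    have h := (two_mul_normSq_sub_re_mul_conj _ _).trans hsymm
    rw [hsum] at h
    exact Complex.ofReal_injective (h.trans (aeval_ofReal gapPoly _))
  have hre : |2 * z.re| ≤ 4 := by
    rw [abs_mul, abs_two]
    linarith [Complex.abs_re_le_norm z]
  linarith [gapPoly_pos_of_abs_le hre]

theorem stmt_8 (n : ℕ) (hn : 0 < n) (z : ℂ) (hz : ‖z‖ = 2) :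
    ¬ (DpolyC n).IsRoot z := by
  intro hroot
  have hA : aeval z DpolyA = n * aeval z DpolyB := by
    rwa [IsRoot, eval_DpolyC, sub_eq_zero] at hroot
  have hre : (aeval z DpolyA * conj (aeval z DpolyB)).re
      = n * Complex.normSq (aeval z DpolyB) := by
    rw [hA, mul_assoc, Complex.mul_conj, ← Complex.ofReal_natCast, ← Complex.ofReal_mul,
      Complex.ofReal_re]
  have hn1 : (1 : ℝ) ≤ n := by exact_mod_cast hn
  nlinarith [re_mul_conj_lt_normSq hz, Complex.normSq_nonneg (aeval z DpolyB)]
end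

section
/- For every positive integer n, the largest real root τ of D_n(t) = t^9 - (n+3)t^8 - (n-4)t^7 + (2n-8)t^6 + (2n+8)t^5 + (2n-8)t^4 - (2n-11)t^3 + (3n-5)t^2 + (3n+4)t - 4(n+1) is a Perron number: τ > 1 is a real algebraic integer and every other complex root of D_n has absolute value strictly less than τ. -/
/-!
By the intermediate value theorem `D_n` has a real root `τ` with `n + 2 ≤ τ ≤ n + 4`, and `τ` is
an algebraic integer because `D_n` is monic with integer coefficients. The quotient
`D_n / (t - τ) = t ^ 8 + e₇ t ^ 7 + ⋯ + e₀` has real coefficients given by Horner's recursion,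
and `τ * e₀ = 4 (n + 1)` lets one bound them one after the other: `|eᵢ| ≤ 4`, with
`∑ |eᵢ| 3 ^ i < 3 ^ 8`. A Cauchy-type estimate then puts every root of the quotient, i.e. every
root of `D_n` other than `τ`, in the open disc of radius `3 ≤ τ`.
-/

open Polynomial

open Finset

theorem Polynomial.Monic.norm_lt_of_isRoot_of_sum_lt {K : Type*} [NormedField K] {p : K[X]}
    (hp : p.Monic) {R : ℝ} (hR : 0 < R)
    (hsum : ∑ i ∈ range p.natDegree, ‖p.coeff i‖ * R ^ i < R ^ p.natDegree) {z : K}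
    (hz : p.IsRoot z) : ‖z‖ < R := by
  by_contra! hRz
  set k := p.natDegree
  have hzk : z ^ k = -∑ i ∈ range k, p.coeff i * z ^ i := by
    have h := hz
    rw [IsRoot, hp.as_sum, eval_add, eval_finsetSum] at h
    simp only [eval_pow, eval_X, eval_mul, eval_C] at h
    linear_combination h
  have hρ : 1 ≤ ‖z‖ / R := (one_le_div hR).2 hRz
  have hR' : R ≠ 0 := hR.ne'
  have hbound : ‖z‖ ^ k ≤ (‖z‖ / R) ^ k * ∑ i ∈ range k, ‖p.coeff i‖ * R ^ i := calc
    ‖z‖ ^ k = ‖∑ i ∈ range k, p.coeff i * z ^ i‖ := by rw [← norm_pow, hzk, norm_neg]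
    _ ≤ ∑ i ∈ range k, ‖p.coeff i‖ * R ^ i * (‖z‖ / R) ^ i :=
      (norm_sum_le _ _).trans_eq <| sum_congr rfl fun i _ => by
        rw [norm_mul, norm_pow, div_pow, mul_assoc, mul_div_cancel₀ _ (pow_ne_zero _ hR')]
    _ ≤ ∑ i ∈ range k, ‖p.coeff i‖ * R ^ i * (‖z‖ / R) ^ k :=
      sum_le_sum fun i hi => mul_le_mul_of_nonneg_left
        (pow_le_pow_right₀ hρ (mem_range.1 hi).le) (by positivity)
    _ = (‖z‖ / R) ^ k * ∑ i ∈ range k, ‖p.coeff i‖ * R ^ i := by rw [← sum_mul, mul_comm]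
  have : (‖z‖ / R) ^ k * R ^ k = ‖z‖ ^ k := by rw [← mul_pow, div_mul_cancel₀ _ hR']
  linarith [mul_lt_mul_of_pos_left hsum (pow_pos (zero_lt_one.trans_le hρ) k)]

lemma Polynomial.Monic.divByMonic_X_sub_C {R : Type*} [CommRing R] [IsDomain R] {p : R[X]}
    (hp : p.Monic) (hdeg : p.degree ≠ 0) (a : R) : (p /ₘ (X - C a)).Monic :=
  (leadingCoeff_divByMonic_X_sub_C p hdeg a).trans hp

lemma Polynomial.IsRoot.mul_coeff_zero_divByMonic {R : Type*} [CommRing R] {p : R[X]} {a : R}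
    (ha : p.IsRoot a) : a * (p /ₘ (X - C a)).coeff 0 = -p.coeff 0 := by
  have := congrArg (coeff · 0) (mul_divByMonic_eq_iff_isRoot.2 ha)
  simp only [mul_coeff_zero, coeff_sub, coeff_X_zero, coeff_C_zero] at this
  linear_combination -this

lemma le_and_le_of_mul_eq {a b c lo hi : ℝ} (ha : 0 < a) (h : a * b = c) (hlo : lo * a ≤ c)
    (hhi : c ≤ hi * a) : lo ≤ b ∧ b ≤ hi :=
  ⟨le_of_mul_le_mul_right (by linarith) ha, le_of_mul_le_mul_right (by linarith) ha⟩

noncomputable def DpolyZ (n : ℕ) : ℤ[X] :=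
  X ^ 9 - C ((n : ℤ) + 3) * X ^ 8 - C ((n : ℤ) - 4) * X ^ 7 + C (2 * (n : ℤ) - 8) * X ^ 6
    + C (2 * (n : ℤ) + 8) * X ^ 5 + C (2 * (n : ℤ) - 8) * X ^ 4 - C (2 * (n : ℤ) - 11) * X ^ 3
    + C (3 * (n : ℤ) - 5) * X ^ 2 + C (3 * (n : ℤ) + 4) * X - C (4 * ((n : ℤ) + 1))

noncomputable def DpolyR (n : ℕ) : ℝ[X] := (DpolyZ n).map (Int.castRingHom ℝ)

lemma monic_DpolyZ (n : ℕ) : (DpolyZ n).Monic := by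
  unfold DpolyZ; monicity!

lemma monic_DpolyR (n : ℕ) : (DpolyR n).Monic :=
  (monic_DpolyZ n).map _

lemma natDegree_DpolyR (n : ℕ) : (DpolyR n).natDegree = 9 := by
  rw [DpolyR, (monic_DpolyZ n).natDegree_map]
  unfold DpolyZ; compute_degree!

lemma map_DpolyR (n : ℕ) : (DpolyR n).map Complex.ofRealHom = DpolyC n := by
  simp only [DpolyR, DpolyZ, DpolyC, Polynomial.map_sub, Polynomial.map_add, Polynomial.map_mul,
    Polynomial.map_pow, Polynomial.map_X, Polynomial.map_C]
  simp only [eq_intCast, Complex.ofRealHom_eq_coe]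
  push_cast
  rfl

lemma eval_DpolyR (n : ℕ) (t : ℝ) : (DpolyR n).eval t =
    t ^ 9 - (n + 3) * t ^ 8 - (n - 4) * t ^ 7 + (2 * n - 8) * t ^ 6 + (2 * n + 8) * t ^ 5
      + (2 * n - 8) * t ^ 4 - (2 * n - 11) * t ^ 3 + (3 * n - 5) * t ^ 2 + (3 * n + 4) * t
      - 4 * (n + 1) := by
  simp [DpolyR, DpolyZ]

lemma isIntegral_of_isRoot_DpolyR {n : ℕ} {τ : ℝ} (hτ : (DpolyR n).IsRoot τ) : IsIntegral ℤ τ :=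
  ⟨DpolyZ n, monic_DpolyZ n, by
    rwa [← aeval_def, ← eval_map_algebraMap, algebraMap_int_eq]⟩

lemma exists_isRoot_DpolyR (n : ℕ) : ∃ τ : ℝ, (DpolyR n).IsRoot τ ∧ n + 2 ≤ τ ∧ τ ≤ n + 4 := by
  have hneg : (DpolyR n).eval ((n : ℝ) + 2) ≤ 0 := by
    have : (DpolyR n).eval ((n : ℝ) + 2) = -(2 * n ^ 8 + 24 * n ^ 7 + 122 * n ^ 6 + 338 * n ^ 5
        + 554 * n ^ 4 + 558 * n ^ 3 + 364 * n ^ 2 + 174 * n + 56) := by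
      rw [eval_DpolyR]; ring
    rw [this, neg_nonpos]; positivity
  have hpos : 0 ≤ (DpolyR n).eval ((n : ℝ) + 4) := by
    have : (DpolyR n).eval ((n : ℝ) + 4) = 10 * n ^ 7 + 266 * n ^ 6 + 3026 * n ^ 5 + 19062 * n ^ 4
        + 71734 * n ^ 3 + 161082 * n ^ 2 + 199588 * n + 105084 := by
      rw [eval_DpolyR]; ring
    rw [this]; positivity
  obtain ⟨τ, ⟨hlo, hhi⟩, hτ⟩ := intermediate_value_Icc (by linarith)
    (DpolyR n).continuous.continuousOn ⟨hneg, hpos⟩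
  exact ⟨τ, hτ, hlo, hhi⟩

noncomputable def DquotR (n : ℕ) (τ : ℝ) : ℝ[X] := DpolyR n /ₘ (X - C τ)

lemma monic_DquotR (n : ℕ) (τ : ℝ) : (DquotR n τ).Monic :=
  (monic_DpolyR n).divByMonic_X_sub_C
    (by rw [degree_eq_natDegree (monic_DpolyR n).ne_zero, natDegree_DpolyR]; decide) τ

lemma natDegree_DquotR (n : ℕ) (τ : ℝ) : (DquotR n τ).natDegree = 8 := by
  rw [DquotR, natDegree_divByMonic _ (monic_X_sub_C τ), natDegree_DpolyR, natDegree_X_sub_C]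

lemma coeff_DquotR_rec {n : ℕ} {τ : ℝ} (hτ : (DpolyR n).IsRoot τ) :
    τ * (DquotR n τ).coeff 0 = 4 * (n + 1) ∧
    τ * (DquotR n τ).coeff 1 = (DquotR n τ).coeff 0 - (3 * n + 4) ∧
    τ * (DquotR n τ).coeff 2 = (DquotR n τ).coeff 1 - (3 * n - 5) ∧
    τ * (DquotR n τ).coeff 3 = (DquotR n τ).coeff 2 + (2 * n - 11) ∧
    τ * (DquotR n τ).coeff 4 = (DquotR n τ).coeff 3 - (2 * n - 8) ∧
    τ * (DquotR n τ).coeff 5 = (DquotR n τ).coeff 4 - (2 * n + 8) ∧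
    τ * (DquotR n τ).coeff 6 = (DquotR n τ).coeff 5 - (2 * n - 8) ∧
    τ * (DquotR n τ).coeff 7 = (DquotR n τ).coeff 6 + (n - 4) ∧
    (DquotR n τ).coeff 7 = τ - (n + 3) := by
  have hrec (i : ℕ) : τ * (DquotR n τ).coeff (i + 1) =
      (DquotR n τ).coeff i - (DpolyR n).coeff (i + 1) := by
    rw [DquotR, coeff_divByMonic_X_sub_C_rec (DpolyR n) τ i]; ring
  have h0 : τ * (DquotR n τ).coeff 0 = -(DpolyR n).coeff 0 := hτ.mul_coeff_zero_divByMonic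
  have h8 : (DquotR n τ).coeff 8 = 1 := by
    simpa [Monic, leadingCoeff, natDegree_DquotR] using monic_DquotR n τ
  have h7 := hrec 7
  rw [h8] at h7
  have r1 := hrec 0
  have r2 := hrec 1
  have r3 := hrec 2
  have r4 := hrec 3
  have r5 := hrec 4
  have r6 := hrec 5
  have r7 := hrec 6
  simp only [DpolyR, coeff_map, DpolyZ, coeff_sub, coeff_add, coeff_C_mul, coeff_X_pow,
    coeff_X, coeff_C] at h0 h7 r1 r2 r3 r4 r5 r6 r7
  norm_num at h0 h7 r1 r2 r3 r4 r5 r6 r7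
  refine ⟨?_, ?_, ?_, ?_, ?_, ?_, ?_, ?_, ?_⟩ <;> linarith

lemma sum_abs_coeff_DquotR_lt {n : ℕ} (hn : 0 < n) {τ : ℝ} (hτ : (DpolyR n).IsRoot τ)
    (hlo : n + 2 ≤ τ) (hhi : τ ≤ n + 4) :
    ∑ i ∈ range 8, |(DquotR n τ).coeff i| * 3 ^ i < 3 ^ 8 := by
  have hN : (1 : ℝ) ≤ n := by exact_mod_cast hn
  have hτ0 : 0 < τ := by linarith
  obtain ⟨r0, r1, r2, r3, r4, r5, r6, r7, h7⟩ := coeff_DquotR_rec hτ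
  set e := (DquotR n τ).coeff
  -- Horner's recursion read upwards from `τ * e 0 = 4 (n + 1)`: each coefficient is squeezed
  -- using the interval of the previous one and `n + 2 ≤ τ ≤ n + 4`.
  obtain ⟨l0, u0⟩ : 8/5 ≤ e 0 ∧ e 0 ≤ 4 :=
    le_and_le_of_mul_eq hτ0 r0 (by linarith) (by linarith)
  obtain ⟨l1, u1⟩ : -3 ≤ e 1 ∧ e 1 ≤ -3/5 :=
    le_and_le_of_mul_eq hτ0 r1 (by linarith) (by linarith)
  obtain ⟨l2, u2⟩ : -3 ≤ e 2 ∧ e 2 ≤ 1/2 :=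
    le_and_le_of_mul_eq hτ0 r2 (by linarith) (by linarith)
  obtain ⟨l3, u3⟩ : -4 ≤ e 3 ∧ e 3 ≤ 2 :=
    le_and_le_of_mul_eq hτ0 r3 (by linarith) (by linarith)
  obtain ⟨l4, u4⟩ : -2 ≤ e 4 ∧ e 4 ≤ 3 :=
    le_and_le_of_mul_eq hτ0 r4 (by linarith) (by linarith)
  obtain ⟨l5, u5⟩ : -4 ≤ e 5 ∧ e 5 ≤ -1 :=
    le_and_le_of_mul_eq hτ0 r5 (by linarith) (by linarith)
  obtain ⟨l6, u6⟩ : -2 ≤ e 6 ∧ e 6 ≤ 2 :=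
    le_and_le_of_mul_eq hτ0 r6 (by linarith) (by linarith)
  simp only [sum_range_succ, sum_range_zero]
  norm_num
  linarith [abs_le.2 (⟨by linarith, by linarith⟩ : -4 ≤ e 0 ∧ e 0 ≤ 4),
    abs_le.2 (⟨by linarith, by linarith⟩ : -3 ≤ e 1 ∧ e 1 ≤ 3),
    abs_le.2 (⟨by linarith, by linarith⟩ : -3 ≤ e 2 ∧ e 2 ≤ 3),
    abs_le.2 (⟨by linarith, by linarith⟩ : -4 ≤ e 3 ∧ e 3 ≤ 4),
    abs_le.2 (⟨by linarith, by linarith⟩ : -3 ≤ e 4 ∧ e 4 ≤ 3),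
    abs_le.2 (⟨by linarith, by linarith⟩ : -4 ≤ e 5 ∧ e 5 ≤ 4),
    abs_le.2 (⟨by linarith, by linarith⟩ : -2 ≤ e 6 ∧ e 6 ≤ 2),
    abs_le.2 (⟨by linarith, by linarith⟩ : -1 ≤ e 7 ∧ e 7 ≤ 1)]

lemma norm_lt_three_of_isRoot_DpolyC {n : ℕ} (hn : 0 < n) {τ : ℝ} (hτ : (DpolyR n).IsRoot τ)
    (hlo : n + 2 ≤ τ) (hhi : τ ≤ n + 4) {z : ℂ} (hz : (DpolyC n).IsRoot z) (hne : z ≠ τ) :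
    ‖z‖ < 3 := by
  have hfac : DpolyC n = (X - C (τ : ℂ)) * (DquotR n τ).map Complex.ofRealHom := by
    have := congrArg (map Complex.ofRealHom) (mul_divByMonic_eq_iff_isRoot.2 hτ)
    rwa [map_DpolyR, Polynomial.map_mul, Polynomial.map_sub, Polynomial.map_X, Polynomial.map_C,
      Complex.ofRealHom_eq_coe, eq_comm] at this
  have hq : ((DquotR n τ).map Complex.ofRealHom).IsRoot z := by
    rw [hfac, IsRoot, eval_mul] at hz
    exact (mul_eq_zero.1 hz).resolve_left (by simpa [sub_eq_zero] using hne)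
  refine ((monic_DquotR n τ).map _).norm_lt_of_isRoot_of_sum_lt three_pos ?_ hq
  simpa [natDegree_map, coeff_map, natDegree_DquotR] using
    sum_abs_coeff_DquotR_lt hn hτ hlo hhi

theorem stmt_9 (n : ℕ) (hn : 0 < n) :
    ∃ τ : ℝ, (DpolyC n).IsRoot (τ : ℂ) ∧
      (∀ s : ℝ, (DpolyC n).IsRoot (s : ℂ) → s ≤ τ) ∧
      1 < τ ∧ IsIntegral ℤ τ ∧
      ∀ z : ℂ, (DpolyC n).IsRoot z → z ≠ (τ : ℂ) → ‖z‖ < τ := by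
  obtain ⟨τ, hτ, hlo, hhi⟩ := exists_isRoot_DpolyR n
  have hτ3 : 3 ≤ τ := by linarith [show (1 : ℝ) ≤ n by exact_mod_cast hn]
  have hsmall (z : ℂ) (hz : (DpolyC n).IsRoot z) (hne : z ≠ τ) : ‖z‖ < 3 :=
    norm_lt_three_of_isRoot_DpolyC hn hτ hlo hhi hz hne
  refine ⟨τ, ?_, fun s hs => ?_, by linarith, isIntegral_of_isRoot_DpolyR hτ,
    fun z hz hne => (hsmall z hz hne).trans_le hτ3⟩
  · rw [← map_DpolyR]
    exact hτ.map
  · rcases eq_or_ne (s : ℂ) τ with h | h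
    · exact (Complex.ofReal_injective h).le
    · have := hsmall s hs h
      rw [Complex.norm_real, Real.norm_eq_abs] at this
      linarith [le_abs_self s]
end

section
/- Let f and g be real polynomials with no common roots, and suppose f(z) is a real polynomial with no roots on the circle S_r of radius r centered at 0, with f(z(t)) = (φ_r(t) + iψ_r(t))/(t²+1)^{deg f} for the parametrization z(t) = r(t²-1)/(t²+1) - i·r·2t/(t²+1). Then the number of roots of f (with multiplicity) in the open disk B_r equals the winding number of the curve f(S_r) about the origin, i.e. (1/2πi)∮_{S_r} f'(z)/f(z) dz. -/
open Polynomial Metric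



private lemma eval_prod_ne_zero (s : Multiset ℂ) (z : ℂ) (h : ∀ a ∈ s, z ≠ a) :
    ((s.map (fun a => X - C a)).prod).eval z ≠ 0 := by
  rw [eval_multiset_prod]
  simp only [Multiset.map_map, Function.comp_apply, eval_sub, eval_X, eval_C]
  refine Multiset.prod_ne_zero ?_
  simp only [Multiset.mem_map]
  rintro ⟨a, ha, h0⟩
  exact h a ha (sub_eq_zero.mp h0)

private lemma logderiv_eq (s : Multiset ℂ) (z : ℂ) (h : ∀ a ∈ s, z ≠ a) :
    (derivative ((s.map (fun a => X - C a)).prod)).eval z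
      / ((s.map (fun a => X - C a)).prod).eval z
      = (s.map (fun a => (z - a)⁻¹)).sum := by
  induction s using Multiset.induction_on with
  | empty => simp
  | cons a t ih =>
    have hza : z - a ≠ 0 := sub_ne_zero.mpr (h a (Multiset.mem_cons_self a t))
    have ht : ∀ b ∈ t, z ≠ b := fun b hb => h b (Multiset.mem_cons_of_mem hb)
    have hP : ((t.map (fun a => X - C a)).prod).eval z ≠ 0 := eval_prod_ne_zero t z ht
    rw [Multiset.map_cons, Multiset.prod_cons, Multiset.map_cons, Multiset.sum_cons, ← ih ht]
    rw [derivative_mul, derivative_X_sub_C]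
    simp only [eval_add, eval_mul, eval_sub, eval_X, eval_C, one_mul, eval_one]
    field_simp

private lemma ci_single {r : ℝ} (hr : 0 < r) {a : ℂ} (ha : ‖a‖ ≠ r) :
    CircleIntegrable (fun z => (z - a)⁻¹) 0 r := by
  apply ContinuousOn.circleIntegrable hr.le
  apply ContinuousOn.inv₀ (by fun_prop)
  intro z hz
  rw [mem_sphere_zero_iff_norm] at hz
  intro h0
  exact ha (by rw [← sub_eq_zero.mp h0]; exact hz)

private lemma single_integral {r : ℝ} (hr : 0 < r) {a : ℂ} (ha : ‖a‖ ≠ r) :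
    (∮ z in C(0, r), (z - a)⁻¹)
      = if ‖a‖ < r then (2 * Real.pi * Complex.I) else 0 := by
  rcases lt_or_gt_of_ne ha with h | h
  · rw [if_pos h]
    exact circleIntegral.integral_sub_inv_of_mem_ball (by simpa [Complex.dist_eq] using h)
  · rw [if_neg (by linarith)]
    apply Complex.circleIntegral_eq_zero_of_differentiable_on_off_countable hr.le
      Set.countable_empty
    · apply ContinuousOn.inv₀ (by fun_prop)
      intro z hz
      rw [Metric.mem_closedBall, Complex.dist_eq, sub_zero] at hz
      intro h0
      rw [sub_eq_zero] at h0
      subst h0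
      linarith
    · rintro z ⟨hz, -⟩
      rw [Metric.mem_ball, Complex.dist_eq, sub_zero] at hz
      apply DifferentiableAt.inv (by fun_prop)
      intro h0
      rw [sub_eq_zero] at h0
      subst h0
      linarith

private lemma ci_sum {r : ℝ} (hr : 0 < r) (s : Multiset ℂ)
    (h : ∀ a ∈ s, ‖a‖ ≠ r) :
    CircleIntegrable (fun z => (s.map (fun a => (z - a)⁻¹)).sum) 0 r := by
  induction s using Multiset.induction_on with
  | empty => simpa using circleIntegrable_const (0 : ℂ) 0 r
  | cons a t ih =>
    simp only [Multiset.map_cons, Multiset.sum_cons]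
    exact (ci_single hr (h a (Multiset.mem_cons_self a t))).add
      (ih fun b hb => h b (Multiset.mem_cons_of_mem hb))

private lemma my_integral_add {f g : ℂ → ℂ} {c : ℂ} {R : ℝ} (hf : CircleIntegrable f c R)
    (hg : CircleIntegrable g c R) :
    (∮ z in C(c, R), (f z + g z)) = (∮ z in C(c, R), f z) + ∮ z in C(c, R), g z := by
  simp only [circleIntegral, smul_add]
  exact intervalIntegral.integral_add hf.out hg.out

private lemma sum_integral {r : ℝ} (hr : 0 < r) (s : Multiset ℂ)
    (h : ∀ a ∈ s, ‖a‖ ≠ r) :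
    (∮ z in C(0, r), (s.map (fun a => (z - a)⁻¹)).sum)
      = (2 * Real.pi * Complex.I) * ((s.filter (fun z => ‖z‖ < r)).card : ℂ) := by
  classical
  induction s using Multiset.induction_on with
  | empty => simp [circleIntegral]
  | cons a t ih =>
    have ha := h a (Multiset.mem_cons_self a t)
    have ht : ∀ b ∈ t, ‖b‖ ≠ r := fun b hb => h b (Multiset.mem_cons_of_mem hb)
    calc (∮ z in C(0, r), ((a ::ₘ t).map (fun a => (z - a)⁻¹)).sum)
        = (∮ z in C(0, r), (z - a)⁻¹ + (t.map (fun a => (z - a)⁻¹)).sum) := by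
          simp only [Multiset.map_cons, Multiset.sum_cons]
      _ = (∮ z in C(0, r), (z - a)⁻¹) + ∮ z in C(0, r), (t.map (fun a => (z - a)⁻¹)).sum :=
          my_integral_add (ci_single hr ha) (ci_sum hr t ht)
      _ = _ := by
          rw [single_integral hr ha, ih ht, Multiset.filter_cons]
          by_cases hlt : ‖a‖ < r <;> simp [hlt] <;> ring

/-- Kronecker's theorem setup (the argument principle for a real polynomial on a disk):
if a real polynomial `f` has no roots on the circle of radius `r`, then the number of its
complex roots in the open disk `B_r`, counted with multiplicity, equals the winding number
of `f(S_r)` about the origin, i.e. `(1/2πi) ∮_{S_r} f'(z)/f(z) dz`. -/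
theorem stmt_16 (f : Polynomial ℝ) (hf : f ≠ 0) (r : ℝ) (hr : 0 < r)
    (hcirc : ∀ z : ℂ, ‖z‖ = r → (f.map (algebraMap ℝ ℂ)).eval z ≠ 0) :
    ((((f.map (algebraMap ℝ ℂ)).roots.filter (fun z => ‖z‖ < r)).card : ℂ))
      = (1 / (2 * Real.pi * Complex.I)) *
          ∮ z in C(0, r), (f.map (algebraMap ℝ ℂ)).derivative.eval z
            / (f.map (algebraMap ℝ ℂ)).eval z := by
  set F := f.map (algebraMap ℝ ℂ) with hF
  have hF0 : F ≠ 0 := (Polynomial.map_ne_zero_iff (algebraMap ℝ ℂ).injective).mpr hf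
  have hcard : F.roots.card = F.natDegree :=
    (splits_iff_card_roots).mp (IsAlgClosed.splits F)
  have hfact : C F.leadingCoeff * (F.roots.map (fun a => X - C a)).prod = F :=
    C_leadingCoeff_mul_prod_multiset_X_sub_C hcard
  have hlc : F.leadingCoeff ≠ 0 := leadingCoeff_ne_zero.mpr hF0
  have hroot_ne : ∀ a ∈ F.roots, ‖a‖ ≠ r := by
    intro a ha h
    exact hcirc a h ((mem_roots hF0).mp ha)
  have key : Set.EqOn (fun z => F.derivative.eval z / F.eval z)
      (fun z => (F.roots.map (fun a => (z - a)⁻¹)).sum) (Metric.sphere (0:ℂ) r) := by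
    intro z hz
    rw [mem_sphere_zero_iff_norm] at hz
    have hzr : ‖z‖ = r := hz
    have hzne : ∀ a ∈ F.roots, z ≠ a := by
      rintro a ha rfl
      exact hroot_ne z ha hzr
    simp only
    conv_lhs => rw [← hfact]
    rw [derivative_mul, derivative_C, zero_mul, zero_add, eval_mul, eval_mul, eval_C,
      mul_div_mul_left _ _ hlc]
    exact logderiv_eq F.roots z hzne
  rw [circleIntegral.integral_congr hr.le key, sum_integral hr F.roots hroot_ne]
  have h2pi : (2 * (Real.pi : ℂ) * Complex.I) ≠ 0 := Complex.two_pi_I_ne_zero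
  field_simp
end
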